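/- Let γ : I → ℝ³ be a smooth unit-speed spacelike curve on an open interval I with γ''(s) spacelike and nonzero for all s, with curvature κ, Frenet frame (T, N, B) and torsion τ. Suppose τ(s) = c·κ(s) for all s, where c is a constant with c² < 1 (γ is a helix with τ² < κ²). Then the vector U(s) := (−c·T(s) + B(s))/√(1 − c²) is independent of s, satisfies ⟨U, U⟩ = −1, and ⟨B(s), U⟩ = −1/√(1 − c²) = −κ(s)/√(κ(s)² − τ(s)²) for all s. Hence the tangent developable surface of γ is a constant angle surface, with hyperbolic angle θ given by cosh θ = κ/√(κ² − τ²). -/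

import Mathlib

/-- The Lorentzian inner product on Minkowski 3-space. -/
def ml (u v : Fin 3 → ℝ) : ℝ := u 0 * v 0 + u 1 * v 1 - u 2 * v 2

/-- The Lorentzian cross product on Minkowski 3-space. -/
def lcross (u v : Fin 3 → ℝ) : Fin 3 → ℝ :=
  ![u 1 * v 2 - u 2 * v 1, u 2 * v 0 - u 0 * v 2, u 1 * v 0 - u 0 * v 1]

/-- The curvature `κ(s) = √⟨γ''(s), γ''(s)⟩` of a unit-speed spacelike curve with spacelike
acceleration. -/
noncomputable def curv (γ : ℝ → Fin 3 → ℝ) (s : ℝ) : ℝ :=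
  Real.sqrt (ml (deriv (deriv γ) s) (deriv (deriv γ) s))

/-- The Frenet tangent `T(s) = γ'(s)`. -/
noncomputable def frenetT (γ : ℝ → Fin 3 → ℝ) (s : ℝ) : Fin 3 → ℝ := deriv γ s

/-- The Frenet normal `N(s) = γ''(s)/κ(s)`. -/
noncomputable def frenetN (γ : ℝ → Fin 3 → ℝ) (s : ℝ) : Fin 3 → ℝ :=
  (curv γ s)⁻¹ • deriv (deriv γ) s

/-- The Frenet binormal `B(s) = T(s) ×_L N(s)`. -/
noncomputable def frenetB (γ : ℝ → Fin 3 → ℝ) (s : ℝ) : Fin 3 → ℝ :=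
  lcross (frenetT γ s) (frenetN γ s)

/-- The torsion `τ(s) = -⟨N'(s), B(s)⟩`. -/
noncomputable def tors (γ : ℝ → Fin 3 → ℝ) (s : ℝ) : ℝ :=
  -(ml (deriv (frenetN γ) s) (frenetB γ s))

/-- The candidate constant direction `U(s) = (-c T(s) + B(s))/√(1 - c²)` for a helix with
`τ = c κ`. -/
noncomputable def helixU (γ : ℝ → Fin 3 → ℝ) (c : ℝ) (s : ℝ) : Fin 3 → ℝ :=
  (Real.sqrt (1 - c ^ 2))⁻¹ • ((-c) • frenetT γ s + frenetB γ s)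

lemma lcross_apply0 (u v : Fin 3 → ℝ) : lcross u v 0 = u 1 * v 2 - u 2 * v 1 := rfl
lemma lcross_apply1 (u v : Fin 3 → ℝ) : lcross u v 1 = u 2 * v 0 - u 0 * v 2 := rfl
lemma lcross_apply2 (u v : Fin 3 → ℝ) : lcross u v 2 = u 1 * v 0 - u 0 * v 1 := rfl

lemma ml_comm (u v : Fin 3 → ℝ) : ml u v = ml v u := by simp [ml]; ring

lemma lcross_smul_right (u v : Fin 3 → ℝ) (r : ℝ) : lcross u (r • v) = r • lcross u v := by
  funext i
  fin_cases i <;> simp [lcross] <;> ring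

lemma lcross_add_right (u v w : Fin 3 → ℝ) : lcross u (v + w) = lcross u v + lcross u w := by
  funext i
  fin_cases i <;> simp [lcross] <;> ring

lemma lcross_self (u : Fin 3 → ℝ) : lcross u u = 0 := by
  funext i
  fin_cases i <;> simp [lcross] <;> ring

lemma ml_smul_left (u v : Fin 3 → ℝ) (r : ℝ) : ml (r • u) v = r * ml u v := by
  simp [ml]; ring

lemma ml_smul_right (u v : Fin 3 → ℝ) (r : ℝ) : ml u (r • v) = r * ml u v := by
  simp [ml]; ring

lemma ml_add_left (u v w : Fin 3 → ℝ) : ml (u + v) w = ml u w + ml v w := by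
  simp [ml]; ring

lemma ml_add_right (u v w : Fin 3 → ℝ) : ml u (v + w) = ml u v + ml u w := by
  simp [ml]; ring

lemma ml_lcross_self_left (u v : Fin 3 → ℝ) : ml u (lcross u v) = 0 := by
  simp [ml, lcross]; ring

lemma ml_lcross_self_right (u v : Fin 3 → ℝ) : ml v (lcross u v) = 0 := by
  simp [ml, lcross]; ring

lemma ml_lcross_lcross (u v : Fin 3 → ℝ) :
    ml (lcross u v) (lcross u v) = ml u v ^ 2 - ml u u * ml v v := by
  simp [ml, lcross]; ring

lemma lcross_expand (T N v : Fin 3 → ℝ) (h2 : ml N N = 1) (h3 : ml T N = 0) :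
    lcross T v = ml v N • lcross T N - ml v (lcross T N) • N := by
  simp only [ml, lcross_apply0, lcross_apply1, lcross_apply2] at h2 h3 ⊢
  funext i
  fin_cases i
  · show lcross T v 0 = (ml v N • lcross T N - ml v (lcross T N) • N) 0
    simp only [Pi.sub_apply, Pi.smul_apply, smul_eq_mul, ml,
      lcross_apply0, lcross_apply1, lcross_apply2]
    linear_combination (T 2 * v 1 - T 1 * v 2) * h2 + (N 1 * v 2 - N 2 * v 1) * h3
  · show lcross T v 1 = (ml v N • lcross T N - ml v (lcross T N) • N) 1
    simp only [Pi.sub_apply, Pi.smul_apply, smul_eq_mul, ml,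
      lcross_apply0, lcross_apply1, lcross_apply2]
    linear_combination (T 0 * v 2 - T 2 * v 0) * h2 + (N 2 * v 0 - N 0 * v 2) * h3
  · show lcross T v 2 = (ml v N • lcross T N - ml v (lcross T N) • N) 2
    simp only [Pi.sub_apply, Pi.smul_apply, smul_eq_mul, ml,
      lcross_apply0, lcross_apply1, lcross_apply2]
    linear_combination (T 0 * v 1 - T 1 * v 0) * h2 + (N 1 * v 0 - N 0 * v 1) * h3

lemma hasDerivAt_ml {f g : ℝ → Fin 3 → ℝ} {f' g' : Fin 3 → ℝ} {s : ℝ}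
    (hf : HasDerivAt f f' s) (hg : HasDerivAt g g' s) :
    HasDerivAt (fun t => ml (f t) (g t)) (ml f' (g s) + ml (f s) g') s := by
  have h0 := hasDerivAt_pi.1 hf
  have h1 := hasDerivAt_pi.1 hg
  have := (((h0 0).mul (h1 0)).add ((h0 1).mul (h1 1))).sub ((h0 2).mul (h1 2))
  convert this using 1 <;> first | rfl | (funext t; simp [ml]) | (simp [ml]; ring)

lemma hasDerivAt_lcross {f g : ℝ → Fin 3 → ℝ} {f' g' : Fin 3 → ℝ} {s : ℝ}
    (hf : HasDerivAt f f' s) (hg : HasDerivAt g g' s) :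
    HasDerivAt (fun t => lcross (f t) (g t)) (lcross f' (g s) + lcross (f s) g') s := by
  have h0 := hasDerivAt_pi.1 hf
  have h1 := hasDerivAt_pi.1 hg
  apply hasDerivAt_pi.2
  intro i
  fin_cases i
  · have := ((h0 1).mul (h1 2)).sub ((h0 2).mul (h1 1))
    convert this using 1 <;> first | rfl | (funext x; simp [lcross]) | (simp [lcross]; ring)
  · have := ((h0 2).mul (h1 0)).sub ((h0 0).mul (h1 2))
    convert this using 1 <;> first | rfl | (funext x; simp [lcross]) | (simp [lcross]; ring)
  · have := ((h0 1).mul (h1 0)).sub ((h0 0).mul (h1 1))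
    convert this using 1 <;> first | rfl | (funext x; simp [lcross]) | (simp [lcross]; ring)

/-- If a unit-speed spacelike curve `γ` with spacelike nonzero acceleration is a helix with
`τ = c κ`, `c² < 1`, then `U(s) = (-c T(s) + B(s))/√(1-c²)` is independent of `s`, is unit
timelike, and `⟨B(s), U⟩ = -1/√(1-c²) = -κ/√(κ²-τ²)`; hence the tangent developable surface
of `γ` (with unit normal `-B`) is a constant angle surface with `cosh θ = κ/√(κ²-τ²)`. -/
theorem helix_tangent_developable_constant_angle
    (a b : ℝ) (γ : ℝ → Fin 3 → ℝ)
    (hγ : ContDiffOn ℝ (⊤ : ℕ∞) γ (Set.Ioo a b))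
    (hunit : ∀ s ∈ Set.Ioo a b, ml (deriv γ s) (deriv γ s) = 1)
    (hacc : ∀ s ∈ Set.Ioo a b, 0 < ml (deriv (deriv γ) s) (deriv (deriv γ) s))
    (c : ℝ) (hc : c ^ 2 < 1)
    (hhelix : ∀ s ∈ Set.Ioo a b, tors γ s = c * curv γ s) :
    (∀ s ∈ Set.Ioo a b, ∀ s' ∈ Set.Ioo a b, helixU γ c s = helixU γ c s') ∧
    (∀ s ∈ Set.Ioo a b, ml (helixU γ c s) (helixU γ c s) = -1) ∧
    (∀ s ∈ Set.Ioo a b,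
      ml (frenetB γ s) (helixU γ c s) = -(1 / Real.sqrt (1 - c ^ 2)) ∧
      ml (frenetB γ s) (helixU γ c s) =
        -(curv γ s / Real.sqrt ((curv γ s) ^ 2 - (tors γ s) ^ 2))) := by
  have hI : IsOpen (Set.Ioo a b) := isOpen_Ioo
  have h1 : ContDiffOn ℝ (⊤ : ℕ∞) (deriv γ) (Set.Ioo a b) := hγ.deriv_of_isOpen hI (by simp)
  have h2 : ContDiffOn ℝ (⊤ : ℕ∞) (deriv (deriv γ)) (Set.Ioo a b) := h1.deriv_of_isOpen hI (by simp)
  have hT : ∀ s ∈ Set.Ioo a b, HasDerivAt γ (deriv γ s) s := fun s hs =>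
    (((hγ.differentiableOn (by simp)) s hs).differentiableAt (hI.mem_nhds hs)).hasDerivAt
  have hD2 : ∀ s ∈ Set.Ioo a b, HasDerivAt (deriv γ) (deriv (deriv γ) s) s := fun s hs =>
    (((h1.differentiableOn (by simp)) s hs).differentiableAt (hI.mem_nhds hs)).hasDerivAt
  have hD3 : ∀ s ∈ Set.Ioo a b,
      HasDerivAt (deriv (deriv γ)) (deriv (deriv (deriv γ)) s) s := fun s hs =>
    (((h2.differentiableOn (by simp)) s hs).differentiableAt (hI.mem_nhds hs)).hasDerivAt
  have hκpos : ∀ s ∈ Set.Ioo a b, 0 < curv γ s := fun s hs => Real.sqrt_pos.2 (hacc s hs)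
  have hκsq : ∀ s ∈ Set.Ioo a b,
      curv γ s ^ 2 = ml (deriv (deriv γ) s) (deriv (deriv γ) s) := fun s hs => by
    simpa [curv] using Real.sq_sqrt (hacc s hs).le
  -- ⟨T, γ''⟩ = 0
  have hTD2 : ∀ s ∈ Set.Ioo a b, ml (deriv γ s) (deriv (deriv γ) s) = 0 := by
    intro s hs
    have hu : HasDerivAt (fun t => ml (deriv γ t) (deriv γ t))
        (ml (deriv (deriv γ) s) (deriv γ s) + ml (deriv γ s) (deriv (deriv γ) s)) s :=
      hasDerivAt_ml (hD2 s hs) (hD2 s hs)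
    have hev : (fun t => ml (deriv γ t) (deriv γ t)) =ᶠ[nhds s] fun _ => (1 : ℝ) :=
      Filter.eventuallyEq_of_mem (hI.mem_nhds hs) hunit
    have hu0 : HasDerivAt (fun t => ml (deriv γ t) (deriv γ t)) 0 s :=
      (hasDerivAt_const s (1 : ℝ)).congr_of_eventuallyEq hev
    have huniq := hu.unique hu0
    have hsymm := ml_comm (deriv (deriv γ) s) (deriv γ s)
    linarith
  have hTN : ∀ s ∈ Set.Ioo a b, ml (deriv γ s) (frenetN γ s) = 0 := by
    intro s hs
    show ml (deriv γ s) ((curv γ s)⁻¹ • deriv (deriv γ) s) = 0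
    rw [ml_smul_right, hTD2 s hs, mul_zero]
  have hNN : ∀ s ∈ Set.Ioo a b, ml (frenetN γ s) (frenetN γ s) = 1 := by
    intro s hs
    show ml ((curv γ s)⁻¹ • deriv (deriv γ) s) ((curv γ s)⁻¹ • deriv (deriv γ) s) = 1
    rw [ml_smul_left, ml_smul_right, ← hκsq s hs]
    have := (hκpos s hs).ne'
    field_simp
  have hBfun : frenetB γ =
      fun t => (curv γ t)⁻¹ • lcross (deriv γ t) (deriv (deriv γ) t) := by
    funext t
    show lcross (deriv γ t) ((curv γ t)⁻¹ • deriv (deriv γ) t) = _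
    exact lcross_smul_right _ _ _
  -- derivative of -c T + B is zero
  have hF : ∀ s ∈ Set.Ioo a b,
      HasDerivAt (fun t => (-c) • deriv γ t + frenetB γ t) 0 s := by
    intro s hs
    have hκ0 : curv γ s ≠ 0 := (hκpos s hs).ne'
    set T := deriv γ s with hTdef
    set D2 := deriv (deriv γ) s with hD2def
    set D3 := deriv (deriv (deriv γ)) s with hD3def
    set κ := curv γ s with hκdef
    have hg : HasDerivAt (fun t => ml (deriv (deriv γ) t) (deriv (deriv γ) t))
        (ml D3 D2 + ml D2 D3) s := hasDerivAt_ml (hD3 s hs) (hD3 s hs)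
    have hκd : HasDerivAt (curv γ) ((ml D3 D2 + ml D2 D3) / (2 * κ)) s :=
      hg.sqrt (ne_of_gt (hacc s hs))
    set κ' := (ml D3 D2 + ml D2 D3) / (2 * κ) with hκ'def
    have hκinv : HasDerivAt (fun t => (curv γ t)⁻¹) (-κ' / κ ^ 2) s := hκd.inv hκ0
    set NV := (κ)⁻¹ • D3 + (-κ' / κ ^ 2) • D2 with hNVdef
    have hNd : HasDerivAt (frenetN γ) NV s := hκinv.smul (hD3 s hs)
    -- torsion gives ml NV B
    have hNVB : ml NV (frenetB γ s) = -(c * κ) := by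
      have hτ := hhelix s hs
      rw [tors, hNd.deriv] at hτ
      linarith
    -- ml NV N = 0
    have hNVN : ml NV ((κ)⁻¹ • D2) = 0 := by
      rw [hNVdef, ml_add_left, ml_smul_left, ml_smul_left, ml_smul_right, ml_smul_right,
        ml_comm D3 D2, ← hκsq s hs, hκ'def]
      field_simp
      linear_combination κ ^ 2 * ml_comm D2 D3
    have hNN' : ml ((κ)⁻¹ • D2) ((κ)⁻¹ • D2) = 1 := hNN s hs
    have hTN' : ml T ((κ)⁻¹ • D2) = 0 := hTN s hs
    have hexp := lcross_expand T ((κ)⁻¹ • D2) NV hNN' hTN'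
    have hBeq : frenetB γ s = lcross T ((κ)⁻¹ • D2) := rfl
    rw [hBeq] at hNVB
    have hw : HasDerivAt (fun t => lcross (deriv γ t) (deriv (deriv γ) t))
        (lcross D2 D2 + lcross T D3) s := hasDerivAt_lcross (hD2 s hs) (hD3 s hs)
    have hBd : HasDerivAt (frenetB γ)
        ((κ)⁻¹ • (lcross D2 D2 + lcross T D3) + (-κ' / κ ^ 2) • lcross T D2) s := by
      rw [hBfun]
      exact hκinv.smul hw
    have hFd : HasDerivAt (fun t => (-c) • deriv γ t + frenetB γ t)
        ((-c) • D2 + ((κ)⁻¹ • (lcross D2 D2 + lcross T D3) + (-κ' / κ ^ 2) • lcross T D2)) s :=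
      ((hD2 s hs).const_smul (-c)).add hBd
    have hval : (-c) • D2 +
        ((κ)⁻¹ • (lcross D2 D2 + lcross T D3) + (-κ' / κ ^ 2) • lcross T D2) = 0 := by
      rw [lcross_self, zero_add]
      have h2' : lcross T NV = (κ)⁻¹ • lcross T D3 + (-κ' / κ ^ 2) • lcross T D2 := by
        rw [hNVdef, lcross_add_right, lcross_smul_right, lcross_smul_right]
      rw [← h2', hexp, hNVN, hNVB, zero_smul, zero_sub, smul_smul]
      have hcc : -(c * κ) * κ⁻¹ = -c := by field_simp
      rw [hcc]
      module
    rw [hval] at hFd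
    exact hFd
  -- constancy of F
  have hFconst : ∀ s ∈ Set.Ioo a b, ∀ s' ∈ Set.Ioo a b,
      ((-c) • deriv γ s + frenetB γ s) = ((-c) • deriv γ s' + frenetB γ s') := by
    intro s hs s' hs'
    have hle := Convex.norm_image_sub_le_of_norm_hasDerivWithin_le
      (f := fun t => (-c) • deriv γ t + frenetB γ t) (f' := fun _ => (0 : Fin 3 → ℝ)) (C := 0)
      (fun x hx => (hF x hx).hasDerivWithinAt) (fun x _ => by simp) (convex_Ioo a b) hs hs'
    have h0 : ‖((-c) • deriv γ s' + frenetB γ s') - ((-c) • deriv γ s + frenetB γ s)‖ ≤ 0 := by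
      simpa using hle
    exact (sub_eq_zero.1 (norm_le_zero_iff.1 h0)).symm
  have hc1 : (0:ℝ) < 1 - c ^ 2 := by linarith
  have hsd : 0 < Real.sqrt (1 - c ^ 2) := Real.sqrt_pos.2 hc1
  have hsq : Real.sqrt (1 - c ^ 2) ^ 2 = 1 - c ^ 2 := Real.sq_sqrt hc1.le
  refine ⟨?_, ?_, ?_⟩
  · intro s hs s' hs'
    show (Real.sqrt (1 - c ^ 2))⁻¹ • ((-c) • deriv γ s + frenetB γ s) =
      (Real.sqrt (1 - c ^ 2))⁻¹ • ((-c) • deriv γ s' + frenetB γ s')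
    rw [hFconst s hs s' hs']
  · intro s hs
    have hTT := hunit s hs
    have hTB : ml (deriv γ s) (frenetB γ s) = 0 := ml_lcross_self_left _ _
    have hBT : ml (frenetB γ s) (deriv γ s) = 0 := by rw [ml_comm]; exact hTB
    have hBB : ml (frenetB γ s) (frenetB γ s) = -1 := by
      show ml (lcross (deriv γ s) (frenetN γ s)) (lcross (deriv γ s) (frenetN γ s)) = -1
      rw [ml_lcross_lcross, hTN s hs, hunit s hs, hNN s hs]
      ring
    show ml ((Real.sqrt (1 - c ^ 2))⁻¹ • ((-c) • deriv γ s + frenetB γ s))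
      ((Real.sqrt (1 - c ^ 2))⁻¹ • ((-c) • deriv γ s + frenetB γ s)) = -1
    simp only [ml_smul_left, ml_smul_right, ml_add_left, ml_add_right]
    rw [hTT, hTB, hBT, hBB]
    field_simp
    linarith [hsq]
  · intro s hs
    have hTB : ml (deriv γ s) (frenetB γ s) = 0 := ml_lcross_self_left _ _
    have hBT : ml (frenetB γ s) (deriv γ s) = 0 := by rw [ml_comm]; exact hTB
    have hBB : ml (frenetB γ s) (frenetB γ s) = -1 := by
      show ml (lcross (deriv γ s) (frenetN γ s)) (lcross (deriv γ s) (frenetN γ s)) = -1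
      rw [ml_lcross_lcross, hTN s hs, hunit s hs, hNN s hs]
      ring
    have e1 : ml (frenetB γ s) (helixU γ c s) = -(1 / Real.sqrt (1 - c ^ 2)) := by
      show ml (frenetB γ s)
        ((Real.sqrt (1 - c ^ 2))⁻¹ • ((-c) • deriv γ s + frenetB γ s)) = _
      simp only [ml_smul_left, ml_smul_right, ml_add_left, ml_add_right]
      rw [hBT, hBB]
      field_simp
      ring
    refine ⟨e1, ?_⟩
    have hκp := hκpos s hs
    have h2' : (curv γ s) ^ 2 - (tors γ s) ^ 2 = (curv γ s) ^ 2 * (1 - c ^ 2) := by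
      rw [hhelix s hs]; ring
    have h3' : Real.sqrt ((curv γ s) ^ 2 - (tors γ s) ^ 2) =
        curv γ s * Real.sqrt (1 - c ^ 2) := by
      rw [h2', Real.sqrt_mul (sq_nonneg _), Real.sqrt_sq hκp.le]
    rw [e1, h3']
    rw [div_mul_eq_div_div, div_self hκp.ne']
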